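/- Let Q be an LDP-polygon with maximal local index m_Q ≥ 2. Then every facet F of Q satisfies |F ∩ ℤ²| ≤ 2 m_Q (m_Q + 1). -/

import Mathlib

open Pointwise

/-- The embedding of the lattice `ℤ²` into `ℚ²`. -/
def toQ (p : ℤ × ℤ) : ℚ × ℚ := ((p.1 : ℚ), (p.2 : ℚ))

/-- The pairing between the dual lattice `ℤ²` and `ℚ²`. -/
def pairQ (η : ℤ × ℤ) (x : ℚ × ℚ) : ℚ := (η.1 : ℚ) * x.1 + (η.2 : ℚ) * x.2

/-- A lattice polygon: the convex hull of finitely many lattice points,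
with nonempty interior. -/
def IsLatticePolygon (Q : Set (ℚ × ℚ)) : Prop :=
  (∃ S : Finset (ℤ × ℤ), Q = convexHull ℚ (toQ '' (S : Set (ℤ × ℤ)))) ∧
    (interior Q).Nonempty

/-- An IP-polygon: a lattice polygon containing the origin in its interior. -/
def IsIPPolygon (Q : Set (ℚ × ℚ)) : Prop :=
  IsLatticePolygon Q ∧ (0 : ℚ × ℚ) ∈ interior Q

/-- The vertices of a polygon are its extreme points. -/
def vertices (Q : Set (ℚ × ℚ)) : Set (ℚ × ℚ) := Set.extremePoints ℚ Q

/-- An LDP-polygon: an IP-polygon all of whose vertices are primitive lattice points. -/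
def IsLDPPolygon (Q : Set (ℚ × ℚ)) : Prop :=
  IsIPPolygon Q ∧ ∀ v ∈ vertices Q, ∃ p : ℤ × ℤ, Int.gcd p.1 p.2 = 1 ∧ v = toQ p

/-- `IsFacetWith Q η l F` : `F` is a facet (edge) of `Q` with primitive outer normal
`η` and local index `l`, i.e. `⟨η, x⟩ = l` on `F` and `⟨η, y⟩ ≤ l` on `Q`. -/
def IsFacetWith (Q : Set (ℚ × ℚ)) (η : ℤ × ℤ) (l : ℤ) (F : Set (ℚ × ℚ)) : Prop :=
  Int.gcd η.1 η.2 = 1 ∧ 0 < l ∧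
  (∀ y ∈ Q, pairQ η y ≤ (l : ℚ)) ∧
  F = {x ∈ Q | pairQ η x = (l : ℚ)} ∧
  ∃ x ∈ F, ∃ y ∈ F, x ≠ y

/-- `F` is a facet of `Q`. -/
def IsFacet (Q F : Set (ℚ × ℚ)) : Prop := ∃ η l, IsFacetWith Q η l F

/-- `HasMaxLocalIndex Q k` : the maximal local index `m_Q` of `Q` equals `k`. -/
def HasMaxLocalIndex (Q : Set (ℚ × ℚ)) (k : ℤ) : Prop :=
  (∃ F η, IsFacetWith Q η k F) ∧ ∀ F η l, IsFacetWith Q η l F → l ≤ k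

/-- `HasIndex Q ℓ` : the index `ℓ_Q` of `Q` (the lcm of all local indices) equals `ℓ`. -/
def HasIndex (Q : Set (ℚ × ℚ)) (ℓ : ℤ) : Prop :=
  0 < ℓ ∧ (∀ F η l, IsFacetWith Q η l F → l ∣ ℓ) ∧
  ∀ m : ℤ, 0 < m → (∀ F η l, IsFacetWith Q η l F → l ∣ m) → ℓ ∣ m

/-- The only lattice point in the interior of `(1/k)·Q` is the origin. -/
def NoIntLatticePts (Q : Set (ℚ × ℚ)) (k : ℤ) : Prop :=
  ∀ p : ℤ × ℤ, toQ p ∈ interior (((k : ℚ)⁻¹) • Q) → p = 0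

/-- `HasOrder Q I` : the order `o_Q` of `Q` equals `I`. -/
def HasOrder (Q : Set (ℚ × ℚ)) (I : ℤ) : Prop :=
  1 ≤ I ∧ NoIntLatticePts Q I ∧ ∀ k : ℤ, 1 ≤ k → NoIntLatticePts Q k → I ≤ k

/-- The cone `pos(F) = ℝ≥0·F` spanned by `F` (inside `ℚ²`). -/
def posCone (F : Set (ℚ × ℚ)) : Set (ℚ × ℚ) :=
  {y | ∃ t : ℚ, 0 ≤ t ∧ ∃ z ∈ F, y = t • z}

/-- The number of lattice points in a subset of `ℚ²`. -/
noncomputable def latticeCount (S : Set (ℚ × ℚ)) : ℕ :=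
  {p : ℤ × ℤ | toQ p ∈ S}.ncard

/-- The normalised volume of `Q`: twice the Euclidean area of the corresponding
real region. -/
noncomputable def nVol (Q : Set (ℚ × ℚ)) : ℝ :=
  2 * (MeasureTheory.volume
    (closure ((fun x : ℚ × ℚ => ((x.1 : ℝ), (x.2 : ℝ))) '' Q))).toReal

/-- Unimodular equivalence: `Q'` is the image of `Q` under an element of `GL(2,ℤ)`. -/
def UnimodEquiv (Q Q' : Set (ℚ × ℚ)) : Prop :=
  ∃ a b c d : ℤ, (a * d - b * c = 1 ∨ a * d - b * c = -1) ∧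
    (fun x : ℚ × ℚ => ((a : ℚ) * x.1 + (b : ℚ) * x.2,
      (c : ℚ) * x.1 + (d : ℚ) * x.2)) '' Q = Q'

/-!
Work in coordinates `(pairQ η, pairQ ζ)` adapted to the facet `F = {pairQ η = l}`, with `τ`
spanning its direction, so that the lattice points of `F` are `l • A + j • τ` for `j` between the
`ζ`-coordinates `-V` and `W` of its endpoints. Take a lattice point `z` of `Q` with
`pairZ η z = -μ < 0`. The facet adjacent to `F` at the endpoint `w` has a normal `η'` with
`pairZ η' τ ≥ 1`, so the point `t • τ` where the segment `[w, z]` crosses `ker η` has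
`t ≤ l' ≤ k`, i.e. `μ W + l (pairZ ζ z) ≤ k (l + μ)`; symmetrically at the other endpoint.
Adding, `μ (W + V) ≤ 2k (l + μ)`, which forces `W + V ≤ 2k (k + 1)`, with equality only if
`μ = 1`, `l = k` and `k ∣ W`. The last is impossible: the vertex `w = l • A + W • τ` is
primitive.
-/

lemma exists_pos_add_smul_mem {E : Type*} [TopologicalSpace E] [AddCommGroup E] [Module ℚ E]
    [ContinuousAdd E] [ContinuousSMul ℚ E] {Q : Set E} {x : E} (hx : x ∈ interior Q) (v : E) :
    ∃ δ : ℚ, 0 < δ ∧ x + δ • v ∈ Q := by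
  have hcont : Continuous fun δ : ℚ => x + δ • v := by fun_prop
  have hnear : ∀ᶠ δ in nhds (0 : ℚ), x + δ • v ∈ Q :=
    (hcont.tendsto' 0 x (by simp)).eventually (mem_interior_iff_mem_nhds.mp hx)
  obtain ⟨δ, hδQ, hδ⟩ := ((hnear.filter_mono nhdsWithin_le_nhds).and
    (self_mem_nhdsWithin (s := Set.Ioi 0))).exists
  exact ⟨δ, hδ, hδQ⟩

lemma isExtreme_setOf_eq_of_forall_le {𝕜 E : Type*} [Field 𝕜] [LinearOrder 𝕜]
    [IsStrictOrderedRing 𝕜] [AddCommGroup E] [Module 𝕜 E] {A : Set E} (f : E →ₗ[𝕜] 𝕜) {c : 𝕜}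
    (h : ∀ y ∈ A, f y ≤ c) : IsExtreme 𝕜 A {x ∈ A | f x = c} := by
  refine ⟨fun x hx => hx.1, fun x₁ hx₁ x₂ hx₂ x hx ⟨a, b, ha, hb, hab, hx'⟩ => ?_⟩
  have hsum : a * f x₁ + b * f x₂ = c := by
    rw [← hx.2, ← hx', map_add, map_smul, map_smul, smul_eq_mul, smul_eq_mul]
  have h₁ := h x₁ hx₁
  have h₂ := h x₂ hx₂
  have : a * c ≤ a * f x₁ := by
    linear_combination c * hab - hsum + mul_le_mul_of_nonneg_left h₂ hb.le
  exact Set.mem_sep hx₁ (le_antisymm h₁ (le_of_mul_le_mul_left this ha))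

lemma mul_sub_mul_le_of_forall_ker_le {𝕜 E : Type*} [Field 𝕜] [LinearOrder 𝕜]
    [IsStrictOrderedRing 𝕜] [AddCommGroup E] [Module 𝕜 E] {Q : Set E} (hQ : Convex 𝕜 Q)
    (f g : E →ₗ[𝕜] 𝕜) {k : 𝕜} (hk : ∀ P ∈ Q, f P = 0 → g P ≤ k) {w z : E} (hw : w ∈ Q)
    (hz : z ∈ Q) (hfw : 0 < f w) (hfz : f z < 0) :
    f w * g z - f z * g w ≤ k * (f w - f z) := by
  have hd : 0 < f w - f z := by linarith
  -- the point where the segment `[w, z]` crosses `ker f`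
  set P := (-f z / (f w - f z)) • w + (f w / (f w - f z)) • z
  have hP : P ∈ Q := hQ hw hz (div_nonneg (by linarith) hd.le) (div_nonneg hfw.le hd.le)
    (by field_simp; ring)
  have hfP : f P = 0 := by
    simp only [P, map_add, map_smul, smul_eq_mul]
    field_simp
    ring
  have hgP := hk P hP hfP
  simp only [P, map_add, map_smul, smul_eq_mul] at hgP
  rw [div_mul_eq_mul_div, div_mul_eq_mul_div, ← add_div, div_le_iff₀ hd] at hgP
  linarith

def pairZ (η p : ℤ × ℤ) : ℤ := η.1 * p.1 + η.2 * p.2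

@[simp]
lemma pairQ_toQ (η p : ℤ × ℤ) : pairQ η (toQ p) = pairZ η p := by
  simp [pairQ, toQ, pairZ]

@[simp]
lemma pairQ_zero (η : ℤ × ℤ) : pairQ η 0 = 0 := by
  simp [pairQ]

@[simp]
lemma pairQ_neg_left (η : ℤ × ℤ) (x : ℚ × ℚ) : pairQ (-η) x = -pairQ η x := by
  simp only [pairQ, Prod.fst_neg, Prod.snd_neg, Int.cast_neg]; ring

@[simp]
lemma pairQ_add_left (η η' : ℤ × ℤ) (x : ℚ × ℚ) : pairQ (η + η') x = pairQ η x + pairQ η' x := by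
  simp only [pairQ, Prod.fst_add, Prod.snd_add, Int.cast_add]; ring

lemma pairQ_smul_left (g : ℤ) (η : ℤ × ℤ) (x : ℚ × ℚ) : pairQ (g • η) x = g * pairQ η x := by
  simp only [pairQ, Prod.smul_fst, Prod.smul_snd, smul_eq_mul, Int.cast_mul]; ring

@[simp]
lemma pairZ_zero_left (p : ℤ × ℤ) : pairZ 0 p = 0 := by
  simp [pairZ]

@[simp]
lemma pairZ_neg_left (η p : ℤ × ℤ) : pairZ (-η) p = -pairZ η p := by
  simp only [pairZ, Prod.fst_neg, Prod.snd_neg]; ring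

@[simp]
lemma pairZ_neg_right (η p : ℤ × ℤ) : pairZ η (-p) = -pairZ η p := by
  simp only [pairZ, Prod.fst_neg, Prod.snd_neg]; ring

@[simp]
lemma pairZ_add_left (η η' p : ℤ × ℤ) : pairZ (η + η') p = pairZ η p + pairZ η' p := by
  simp only [pairZ, Prod.fst_add, Prod.snd_add]; ring

lemma pairZ_smul_left (g : ℤ) (η p : ℤ × ℤ) : pairZ (g • η) p = g * pairZ η p := by
  simp only [pairZ, Prod.smul_fst, Prod.smul_snd, smul_eq_mul]; ring

@[simp]
lemma toQ_neg (p : ℤ × ℤ) : toQ (-p) = -toQ p := by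
  simp [toQ]

lemma toQ_injective : Function.Injective toQ := fun p q h => by
  simp only [toQ, Prod.mk.injEq, Int.cast_inj] at h
  exact Prod.ext h.1 h.2

def pairQₗ (η : ℤ × ℤ) : ℚ × ℚ →ₗ[ℚ] ℚ where
  toFun := pairQ η
  map_add' x y := by simp only [pairQ, Prod.fst_add, Prod.snd_add]; ring
  map_smul' c x := by
    simp only [pairQ, Prod.smul_fst, Prod.smul_snd, smul_eq_mul, RingHom.id_apply]; ring

@[simp]
lemma pairQₗ_apply (η : ℤ × ℤ) (x : ℚ × ℚ) : pairQₗ η x = pairQ η x := rfl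

lemma pairZ_self_pos {η : ℤ × ℤ} (hη : η ≠ 0) : 0 < pairZ η η := by
  obtain ⟨a, b⟩ := η
  have : a ≠ 0 ∨ b ≠ 0 := by
    by_contra! h
    exact hη (by rw [h.1, h.2]; rfl)
  simp only [pairZ]
  rcases this with h | h
  · nlinarith [mul_self_pos.mpr h, mul_self_nonneg b]
  · nlinarith [mul_self_pos.mpr h, mul_self_nonneg a]

lemma ne_zero_of_gcd_eq_one {η : ℤ × ℤ} (hη : Int.gcd η.1 η.2 = 1) : η ≠ 0 := by
  rintro rfl
  simp at hη

lemma pairQ_lt_of_mem_interior {Q : Set (ℚ × ℚ)} {η : ℤ × ℤ} {c : ℚ} (hη : η ≠ 0)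
    (hle : ∀ y ∈ Q, pairQ η y ≤ c) {x : ℚ × ℚ} (hx : x ∈ interior Q) : pairQ η x < c := by
  obtain ⟨δ, hδ, hmem⟩ := exists_pos_add_smul_mem hx (toQ η)
  have hself : (0 : ℚ) < pairZ η η := by exact_mod_cast pairZ_self_pos hη
  have := hle _ hmem
  rw [← pairQₗ_apply, map_add, map_smul, pairQₗ_apply, pairQₗ_apply, pairQ_toQ, smul_eq_mul] at this
  nlinarith

lemma pairQ_le_of_mem_convexHull {S : Set (ℤ × ℤ)} {η : ℤ × ℤ} {c : ℤ}
    (h : ∀ s ∈ S, pairZ η s ≤ c) {x : ℚ × ℚ} (hx : x ∈ convexHull ℚ (toQ '' S)) :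
    pairQ η x ≤ c :=
  convexHull_min (by rintro _ ⟨s, hs, rfl⟩; simpa using h s hs)
    (convex_halfSpace_le (pairQₗ η).isLinear (c : ℚ)) hx

lemma IsFacetWith.pairQ_eq {Q F : Set (ℚ × ℚ)} {η : ℤ × ℤ} {l : ℤ} (hF : IsFacetWith Q η l F)
    {x : ℚ × ℚ} (hx : x ∈ F) : pairQ η x = l := by
  obtain ⟨-, -, -, rfl, -⟩ := hF
  exact hx.2

section LatticePolygon

variable {Q : Set (ℚ × ℚ)} {S : Finset (ℤ × ℤ)}

lemma toQ_mem (hS : Q = convexHull ℚ (toQ '' (S : Set (ℤ × ℤ)))) {s : ℤ × ℤ} (hs : s ∈ S) :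
    toQ s ∈ Q :=
  hS ▸ subset_convexHull ℚ _ (Set.mem_image_of_mem _ hs)

lemma exists_pairZ_neg (hS : Q = convexHull ℚ (toQ '' (S : Set (ℤ × ℤ))))
    (h0 : (0 : ℚ × ℚ) ∈ interior Q) {η : ℤ × ℤ} (hη : η ≠ 0) : ∃ s ∈ S, pairZ η s < 0 := by
  by_contra! h
  have hle : ∀ y ∈ Q, pairQ (-η) y ≤ ((0 : ℤ) : ℚ) := fun y hy =>
    pairQ_le_of_mem_convexHull (fun s hs => by simpa using h s hs) (hS ▸ hy)
  simpa using pairQ_lt_of_mem_interior (neg_ne_zero.mpr hη) hle h0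

lemma exists_pairZ_eq_of_mem (hS : Q = convexHull ℚ (toQ '' (S : Set (ℤ × ℤ))))
    {η : ℤ × ℤ} {l : ℤ} (hle : ∀ s ∈ S, pairZ η s ≤ l) {x : ℚ × ℚ} (hx : x ∈ Q)
    (hxl : pairQ η x = l) : ∃ s ∈ S, pairZ η s = l := by
  by_contra! h
  have := pairQ_le_of_mem_convexHull (c := l - 1)
    (fun s hs => Int.le_sub_one_of_lt ((hle s hs).lt_of_ne (h s hs))) (hS ▸ hx)
  rw [hxl] at this
  push_cast at this
  linarith

lemma pairQ_le_of_face (hS : Q = convexHull ℚ (toQ '' (S : Set (ℤ × ℤ))))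
    {η ζ : ℤ × ℤ} {l W : ℤ} (hle : ∀ s ∈ S, pairZ η s ≤ l)
    (hζ : ∀ s ∈ S, pairZ η s = l → pairZ ζ s ≤ W) {x : ℚ × ℚ} (hx : x ∈ Q)
    (hxl : pairQ η x = l) : pairQ ζ x ≤ W := by
  -- tilting `ζ` by a large multiple of `η` gives a form bounded by its value on the face
  set M := ∑ s ∈ S, |pairZ ζ s - W|
  have hM : ∀ s ∈ S, pairZ ζ s - W ≤ M := fun s hs =>
    (le_abs_self _).trans (Finset.single_le_sum (fun t _ => abs_nonneg (pairZ ζ t - W)) hs)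
  have hMnonneg : 0 ≤ M := Finset.sum_nonneg fun t _ => abs_nonneg _
  have htilt : ∀ s ∈ S, pairZ (ζ + M • η) s ≤ W + M * l := by
    intro s hs
    rw [pairZ_add_left, pairZ_smul_left]
    rcases (hle s hs).lt_or_eq with hlt | heq
    · nlinarith [hM s hs]
    · rw [heq]
      linarith [hζ s hs heq]
  have := pairQ_le_of_mem_convexHull htilt (hS ▸ hx)
  rw [pairQ_add_left, pairQ_smul_left, hxl] at this
  push_cast at this
  linarith

lemma exists_isFacetWith_of_supporting (hS : Q = convexHull ℚ (toQ '' (S : Set (ℤ × ℤ))))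
    (h0 : (0 : ℚ × ℚ) ∈ interior Q) {u p q : ℤ × ℤ} (hu : u ≠ 0) (hp : p ∈ S) (hq : q ∈ S)
    (hpq : p ≠ q) (hsupp : ∀ s ∈ S, pairZ u s ≤ pairZ u p) (hqp : pairZ u q = pairZ u p) :
    ∃ g : ℤ, 0 < g ∧ ∃ η l, u = g • η ∧ IsFacetWith Q η l {x ∈ Q | pairQ η x = l} := by
  have hgcd : 0 < Int.gcd u.1 u.2 := Int.gcd_pos_iff.mpr (by
    by_contra! h
    exact hu (Prod.ext h.1 h.2))
  obtain ⟨g, a, b, hg, hab, hu₁, hu₂⟩ := Int.exists_gcd_one' hgcd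
  have hgZ : (0 : ℤ) < g := by exact_mod_cast hg
  have hu' : u = (g : ℤ) • (a, b) := Prod.ext (by simp [hu₁, mul_comm]) (by simp [hu₂, mul_comm])
  set η : ℤ × ℤ := (a, b)
  have hsupp' : ∀ s ∈ S, pairZ η s ≤ pairZ η p := fun s hs =>
    le_of_mul_le_mul_left (by simpa only [hu', pairZ_smul_left] using hsupp s hs) hgZ
  have hle : ∀ y ∈ Q, pairQ η y ≤ (pairZ η p : ℚ) := fun y hy =>
    pairQ_le_of_mem_convexHull hsupp' (hS ▸ hy)
  have hqp' : pairZ η q = pairZ η p :=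
    mul_left_cancel₀ hgZ.ne' (by simpa only [hu', pairZ_smul_left] using hqp)
  have hpos : (0 : ℚ) < pairZ η p := by
    simpa using pairQ_lt_of_mem_interior (ne_zero_of_gcd_eq_one hab) hle h0
  exact ⟨g, hgZ, η, pairZ η p, hu', hab, by exact_mod_cast hpos, hle, rfl,
    toQ p, ⟨toQ_mem hS hp, by simp⟩, toQ q, ⟨toQ_mem hS hq, by simp [hqp']⟩,
    toQ_injective.ne hpq⟩

lemma exists_isFacetWith_pairZ_pos (hS : Q = convexHull ℚ (toQ '' (S : Set (ℤ × ℤ))))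
    (h0 : (0 : ℚ × ℚ) ∈ interior Q) {η ζ τ w z : ℤ × ℤ} {l : ℤ}
    (hle : ∀ s ∈ S, pairZ η s ≤ l) (hwS : w ∈ S) (hwl : pairZ η w = l)
    (hwmax : ∀ s ∈ S, pairZ η s = l → pairZ ζ s ≤ pairZ ζ w) (hzS : z ∈ S) (hzl : pairZ η z < l)
    (hητ : pairZ η τ = 0) (hζτ : 0 < pairZ ζ τ) :
    ∃ ηH lH FH, IsFacetWith Q ηH lH FH ∧ 0 < pairZ ηH τ := by
  classical
  set Sb := S.filter fun s => pairZ η s < l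
  -- among the lattice points below the face, `t` is seen from `w` at the steepest slope, so the
  -- line through `w` and `t` supports `Q`
  obtain ⟨t, htSb, htmax⟩ := Sb.exists_max_image
    (fun s => ((pairZ ζ s - pairZ ζ w : ℤ) : ℚ) / (l - pairZ η s : ℤ))
    ⟨z, Finset.mem_filter.mpr ⟨hzS, hzl⟩⟩
  obtain ⟨htS, htl⟩ := Finset.mem_filter.mp htSb
  set D := l - pairZ η t
  set N := pairZ ζ t - pairZ ζ w
  have hD : 0 < D := sub_pos.mpr htl
  have hsupp : ∀ s ∈ S, pairZ (D • ζ + N • η) s ≤ pairZ (D • ζ + N • η) w := by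
    intro s hs
    simp only [pairZ_add_left, pairZ_smul_left, hwl]
    rcases (hle s hs).lt_or_eq with hlt | heq
    · have hslope := htmax s (Finset.mem_filter.mpr ⟨hs, hlt⟩)
      rw [div_le_div_iff₀ (by exact_mod_cast sub_pos.mpr hlt) (by exact_mod_cast hD)] at hslope
      have : (pairZ ζ s - pairZ ζ w) * D ≤ N * (l - pairZ η s) := by exact_mod_cast hslope
      linarith
    · rw [heq]
      nlinarith [hwmax s hs heq]
  have hτ : 0 < pairZ (D • ζ + N • η) τ := by
    simpa only [pairZ_add_left, pairZ_smul_left, hητ, mul_zero, add_zero] using mul_pos hD hζτ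
  obtain ⟨g, hg, ηH, lH, hu, hH⟩ := exists_isFacetWith_of_supporting hS h0
    (fun h => hτ.ne' (by rw [h, pairZ_zero_left])) hwS htS (fun h => by simp [← h, hwl] at htl)
    hsupp
    (by simp only [pairZ_add_left, pairZ_smul_left, hwl, D, N]; ring)
  rw [hu, pairZ_smul_left] at hτ
  exact ⟨ηH, lH, _, hH, pos_of_mul_pos_right hτ hg.le⟩

end LatticePolygon

/-- `(A, τ)` is a basis of `ℤ²` with dual basis `(η, ζ)`; in particular `τ` spans the lines
`pairQ η = const`. -/
structure IsAdaptedBasis (η ζ A τ : ℤ × ℤ) : Prop where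
  pairZ_eq_zero : pairZ η τ = 0
  pairZ_eq_one : pairZ ζ τ = 1
  decomp : ∀ x : ℚ × ℚ, x = pairQ η x • toQ A + pairQ ζ x • toQ τ

lemma exists_isAdaptedBasis {η : ℤ × ℤ} (hη : Int.gcd η.1 η.2 = 1) :
    ∃ ζ A τ, IsAdaptedBasis η ζ A τ := by
  obtain ⟨a, b, hab⟩ := Int.isCoprime_iff_gcd_eq_one.mpr hη
  have habQ : (a : ℚ) * η.1 + b * η.2 = 1 := by exact_mod_cast hab
  refine ⟨(-b, a), (a, b), (-η.2, η.1), ⟨by simp [pairZ]; ring, by simp [pairZ]; linarith, ?_⟩⟩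
  intro x
  ext
  · simp [pairQ, toQ]; linear_combination (-x.1) * habQ
  · simp [pairQ, toQ]; linear_combination (-x.2) * habQ

namespace IsAdaptedBasis

variable {η ζ A τ : ℤ × ℤ}

lemma neg (hB : IsAdaptedBasis η ζ A τ) : IsAdaptedBasis η (-ζ) A (-τ) where
  pairZ_eq_zero := by simp [hB.pairZ_eq_zero]
  pairZ_eq_one := by simp [hB.pairZ_eq_one]
  decomp x := by simpa using hB.decomp x

lemma eq_of_pairQ_eq (hB : IsAdaptedBasis η ζ A τ) {x y : ℚ × ℚ} (hη : pairQ η x = pairQ η y)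
    (hζ : pairQ ζ x = pairQ ζ y) : x = y := by
  rw [hB.decomp x, hB.decomp y, hη, hζ]

lemma isCoprime_pairZ (hB : IsAdaptedBasis η ζ A τ) {w : ℤ × ℤ} (hw : Int.gcd w.1 w.2 = 1) :
    IsCoprime (pairZ η w) (pairZ ζ w) := by
  have h := hB.decomp (toQ w)
  rw [pairQ_toQ, pairQ_toQ] at h
  simp only [toQ, Prod.ext_iff, Prod.fst_add, Prod.snd_add, Prod.smul_fst,
    Prod.smul_snd, smul_eq_mul] at h
  have h₁ : w.1 = pairZ η w * A.1 + pairZ ζ w * τ.1 := by exact_mod_cast h.1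
  have h₂ : w.2 = pairZ η w * A.2 + pairZ ζ w * τ.2 := by exact_mod_cast h.2
  obtain ⟨a, b, hab⟩ := Int.isCoprime_iff_gcd_eq_one.mpr hw
  exact ⟨a * A.1 + b * A.2, a * τ.1 + b * τ.2, by linear_combination hab - a * h₁ - b * h₂⟩

lemma mem_extremePoints (hB : IsAdaptedBasis η ζ A τ) {Q : Set (ℚ × ℚ)} {l : ℚ}
    (hle : ∀ y ∈ Q, pairQ η y ≤ l) {w : ℚ × ℚ} (hw : w ∈ Q) (hwl : pairQ η w = l)
    (hwmax : ∀ x ∈ Q, pairQ η x = l → pairQ ζ x ≤ pairQ ζ w) : w ∈ Q.extremePoints ℚ := by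
  have hface := isExtreme_setOf_eq_of_forall_le (pairQₗ η) hle
  have hcorner := isExtreme_setOf_eq_of_forall_le (A := {x ∈ Q | pairQₗ η x = l}) (pairQₗ ζ)
    (c := pairQ ζ w) fun x hx => hwmax x hx.1 hx.2
  have hsingle : {x ∈ {x ∈ Q | pairQₗ η x = l} | pairQₗ ζ x = pairQ ζ w} = {w} := by
    ext x
    simp only [pairQₗ_apply, Set.mem_sep_iff, Set.mem_singleton_iff]
    constructor
    · rintro ⟨⟨-, hxl⟩, hxζ⟩
      exact hB.eq_of_pairQ_eq (hxl.trans hwl.symm) hxζ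
    · rintro rfl
      exact ⟨⟨hw, hwl⟩, rfl⟩
  exact isExtreme_singleton.mp (hsingle ▸ hface.trans hcorner)

lemma latticeCount_le (hB : IsAdaptedBasis η ζ A τ) {F : Set (ℚ × ℚ)} {l V W : ℤ}
    (hF : ∀ x ∈ F, pairQ η x = l) (hW : ∀ x ∈ F, pairQ ζ x ≤ W)
    (hV : ∀ x ∈ F, pairQ (-ζ) x ≤ V) : latticeCount F ≤ (W + V + 1).toNat := by
  have hmaps : ∀ p ∈ {p : ℤ × ℤ | toQ p ∈ F}, pairZ ζ p ∈ Set.Icc (-V) W := fun p hp => by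
    have hVp := hV _ hp
    have hWp := hW _ hp
    rw [pairQ_neg_left, pairQ_toQ] at hVp
    rw [pairQ_toQ] at hWp
    exact ⟨by linarith [(by exact_mod_cast hVp : -pairZ ζ p ≤ V)], by exact_mod_cast hWp⟩
  have hinj : Set.InjOn (pairZ ζ) {p : ℤ × ℤ | toQ p ∈ F} := fun p hp q hq hpq =>
    toQ_injective (hB.eq_of_pairQ_eq ((hF _ hp).trans (hF _ hq).symm) (by simp [hpq]))
  calc latticeCount F ≤ (Set.Icc (-V) W).ncard :=
        Set.ncard_le_ncard_of_injOn _ hmaps hinj (Set.finite_Icc _ _)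
    _ = (W + V + 1).toNat := by
        rw [← Finset.coe_Icc, Set.ncard_coe_finset, Int.card_Icc, sub_neg_eq_add, add_right_comm]

lemma pairQ_le_of_pairQ_eq_zero (hB : IsAdaptedBasis η ζ A τ) {Q F : Set (ℚ × ℚ)}
    {ηH : ℤ × ℤ} {lH : ℤ} (hH : IsFacetWith Q ηH lH F) (hτ : 0 < pairZ ηH τ) {P : ℚ × ℚ}
    (hP : P ∈ Q) (hP0 : pairQ η P = 0) : pairQ ζ P ≤ lH := by
  obtain ⟨-, hlH, hle, -⟩ := hH
  have hPτ : pairQ ηH P = pairQ ζ P * pairZ ηH τ := by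
    have h := congrArg (pairQₗ ηH) (hB.decomp P)
    rwa [hP0, zero_smul, zero_add, map_smul, pairQₗ_apply, pairQₗ_apply, pairQ_toQ,
      smul_eq_mul] at h
  have hHP := hle P hP
  have hτ' : (1 : ℚ) ≤ pairZ ηH τ := by exact_mod_cast hτ
  have hlH' : (0 : ℚ) < lH := by exact_mod_cast hlH
  rw [hPτ] at hHP
  nlinarith

end IsAdaptedBasis

lemma corner_segment_crossing_le {Q F : Set (ℚ × ℚ)} {S : Finset (ℤ × ℤ)} {k l : ℤ}
    {η ζ A τ w z : ℤ × ℤ}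
    (hS : Q = convexHull ℚ (toQ '' (S : Set (ℤ × ℤ)))) (h0 : (0 : ℚ × ℚ) ∈ interior Q)
    (hmax : ∀ F η l, IsFacetWith Q η l F → l ≤ k) (hF : IsFacetWith Q η l F)
    (hB : IsAdaptedBasis η ζ A τ) (hwS : w ∈ S) (hwl : pairZ η w = l)
    (hwmax : ∀ s ∈ S, pairZ η s = l → pairZ ζ s ≤ pairZ ζ w) (hzS : z ∈ S)
    (hz : pairZ η z < 0) :
    l * pairZ ζ z - pairZ η z * pairZ ζ w ≤ k * (l - pairZ η z) := by
  obtain ⟨-, hl, hle, -⟩ := hF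
  have hleS : ∀ s ∈ S, pairZ η s ≤ l := fun s hs => by
    simpa using hle _ (toQ_mem hS hs)
  obtain ⟨ηH, lH, FH, hH, hHτ⟩ := exists_isFacetWith_pairZ_pos hS h0 hleS hwS hwl hwmax hzS
    (hz.trans hl) hB.pairZ_eq_zero (hB.pairZ_eq_one ▸ one_pos)
  have hker : ∀ P ∈ Q, pairQₗ η P = 0 → pairQₗ ζ P ≤ (k : ℚ) := fun P hP hP0 =>
    (hB.pairQ_le_of_pairQ_eq_zero hH hHτ hP hP0).trans (by exact_mod_cast hmax _ _ _ hH)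
  have := mul_sub_mul_le_of_forall_ker_le (hS ▸ convex_convexHull ℚ _) (pairQₗ η) (pairQₗ ζ)
    hker (toQ_mem hS hwS) (toQ_mem hS hzS) (by simpa [hwl] using hl) (by simpa using hz)
  simp only [pairQₗ_apply, pairQ_toQ, hwl] at this
  exact_mod_cast this

/-- `W` is the `ζ`-coordinate of the endpoint of `F` in direction `τ`, a primitive vertex
of `Q`. -/
lemma IsFacetWith.exists_endpoint {Q F : Set (ℚ × ℚ)} {S : Finset (ℤ × ℤ)} {k l : ℤ}
    {η ζ A τ z : ℤ × ℤ} (hS : Q = convexHull ℚ (toQ '' (S : Set (ℤ × ℤ))))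
    (h0 : (0 : ℚ × ℚ) ∈ interior Q)
    (hvert : ∀ v ∈ vertices Q, ∃ p : ℤ × ℤ, Int.gcd p.1 p.2 = 1 ∧ v = toQ p)
    (hmax : ∀ F η l, IsFacetWith Q η l F → l ≤ k) (hF : IsFacetWith Q η l F)
    (hB : IsAdaptedBasis η ζ A τ) (hzS : z ∈ S) (hz : pairZ η z < 0) :
    ∃ W : ℤ, (∀ x ∈ F, pairQ ζ x ≤ W) ∧
      l * pairZ ζ z - pairZ η z * W ≤ k * (l - pairZ η z) ∧ IsCoprime l W := by
  classical
  obtain ⟨-, -, hle, rfl, x₀, hx₀, -⟩ := id hF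
  have hleS : ∀ s ∈ S, pairZ η s ≤ l := fun s hs => by
    simpa using hle _ (toQ_mem hS hs)
  obtain ⟨w, hwT, hwmax⟩ := (S.filter fun s => pairZ η s = l).exists_max_image (pairZ ζ) (by
    obtain ⟨s, hs, hsl⟩ := exists_pairZ_eq_of_mem hS hleS hx₀.1 hx₀.2
    exact ⟨s, Finset.mem_filter.mpr ⟨hs, hsl⟩⟩)
  obtain ⟨hwS, hwl⟩ := Finset.mem_filter.mp hwT
  have hwmax' : ∀ s ∈ S, pairZ η s = l → pairZ ζ s ≤ pairZ ζ w := fun s hs hsl =>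
    hwmax s (Finset.mem_filter.mpr ⟨hs, hsl⟩)
  have hFW : ∀ x ∈ Q, pairQ η x = l → pairQ ζ x ≤ pairZ ζ w := fun x hx hxl =>
    pairQ_le_of_face hS hleS hwmax' hx hxl
  refine ⟨pairZ ζ w, fun x hx => hFW x hx.1 hx.2,
    corner_segment_crossing_le hS h0 hmax hF hB hwS hwl hwmax' hzS hz, ?_⟩
  obtain ⟨p, hp, hpw⟩ := hvert _ (hB.mem_extremePoints hle (toQ_mem hS hwS) (by simp [hwl])
    (by simpa using hFW))
  rw [← toQ_injective hpw] at hp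
  simpa [hwl] using hB.isCoprime_pairZ hp

lemma add_lt_of_crossing_bounds {k l e Z V W : ℤ} (hk : 2 ≤ k) (hlk : l ≤ k) (he : e < 0)
    (hW : l * Z - e * W ≤ k * (l - e)) (hV : l * -Z - e * V ≤ k * (l - e))
    (hcop : IsCoprime l W) : W + V < 2 * k * (k + 1) := by
  by_contra! h
  have hsum : -e * (W + V) ≤ 2 * k * (l - e) := by linarith
  have h₁ : 2 * k * (-e * (k + 1)) ≤ 2 * k * (l - e) := by nlinarith
  have h₂ : -e * (k + 1) ≤ l - e := le_of_mul_le_mul_left h₁ (by omega)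
  have he₁ : e = -1 := by nlinarith
  subst he₁
  have hlk' : l = k := by linarith
  subst hlk'
  have hdvd : l ∣ W := ⟨l + 1 - Z, by linarith⟩
  have := Int.isUnit_iff.mp (hcop.isUnit_of_dvd' dvd_rfl hdvd)
  omega

/-- If `Q` is an LDP-polygon of maximal local index `m_Q ≥ 2`, then every facet `F`
of `Q` satisfies `|F ∩ ℤ²| ≤ 2·m_Q·(m_Q + 1)`. -/
theorem facet_lattice_points_ldp_bound
    (Q : Set (ℚ × ℚ)) (k : ℤ) (hQ : IsLDPPolygon Q) (hk : 2 ≤ k)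
    (hmax : HasMaxLocalIndex Q k)
    (F : Set (ℚ × ℚ)) (η : ℤ × ℤ) (l : ℤ) (hF : IsFacetWith Q η l F) :
    (latticeCount F : ℤ) ≤ 2 * k * (k + 1) := by
  obtain ⟨⟨⟨⟨S, hS⟩, -⟩, h0⟩, hvert⟩ := hQ
  obtain ⟨ζ, A, τ, hB⟩ := exists_isAdaptedBasis hF.1
  obtain ⟨z, hzS, hz⟩ := exists_pairZ_neg hS h0 (ne_zero_of_gcd_eq_one hF.1)
  obtain ⟨W, hFW, hW, hcop⟩ := hF.exists_endpoint hS h0 hvert hmax.2 hB hzS hz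
  obtain ⟨V, hFV, hV, -⟩ := hF.exists_endpoint hS h0 hvert hmax.2 hB.neg hzS hz
  have hcount := hB.latticeCount_le (fun x hx => hF.pairQ_eq hx) hFW hFV
  rw [pairZ_neg_left] at hV
  have hwidth := add_lt_of_crossing_bounds hk (hmax.2 F η l hF) hz hW hV hcop
  have : 0 ≤ 2 * k * (k + 1) := by positivity
  exact (Nat.cast_le.mpr hcount).trans (by omega)
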